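/- For every 4×4 matrix A with all entries in {−1,1}, the integer per A is divisible by 4. -/

import Mathlib

/-!
For odd integers `x, y` one has `x + y ≡ 1 + x y (mod 4)`, so a sum of `N` odd integers is
congruent to `N - 1` plus their product. The `24` terms of `per A` are `±1`, and their product
is `1`: in row `i`, the permutations `σ` and `σ * swap a b` (with `a, b ≠ i`) contribute the
same factor `A i (σ i)`, so each row contributes a product of squares. Hence
`per A ≡ 24 - 1 + 1 ≡ 0 (mod 4)`.
-/

open Matrix

/-- The permanent of a square integer matrix. -/
def per {n : ℕ} (A : Matrix (Fin n) (Fin n) ℤ) : ℤ :=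
  ∑ σ : Equiv.Perm (Fin n), ∏ i, A i (σ i)

open Finset

theorem Int.add_modEq_one_add_mul_of_odd {x y : ℤ} (hx : Odd x) (hy : Odd y) :
    x + y ≡ 1 + x * y [ZMOD 4] := by
  -- `1 + x y - (x + y) = (1 - x) (1 - y)` is a product of two even numbers.
  obtain ⟨a, rfl⟩ := hx
  obtain ⟨b, rfl⟩ := hy
  exact Int.modEq_iff_dvd.mpr ⟨a * b, by ring⟩

theorem Int.sum_modEq_card_sub_one_add_prod_of_odd {ι : Type*} [DecidableEq ι] (s : Finset ι)
    {f : ι → ℤ} (hf : ∀ a ∈ s, Odd (f a)) :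
    ∑ a ∈ s, f a ≡ #s - 1 + ∏ a ∈ s, f a [ZMOD 4] := by
  induction s using Finset.induction_on with
  | empty => simp [Int.ModEq]
  | insert x s hx ih =>
    have hprod : Odd (∏ a ∈ s, f a) :=
      prod_induction f Odd (fun _ _ => Odd.mul) odd_one fun a ha => hf a (mem_insert_of_mem ha)
    rw [sum_insert hx, prod_insert hx, card_insert_of_notMem hx]
    calc f x + ∑ a ∈ s, f a ≡ f x + (#s - 1 + ∏ a ∈ s, f a) [ZMOD 4] :=
          (ih fun a ha => hf a (mem_insert_of_mem ha)).add_left _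
      _ = #s - 1 + (f x + ∏ a ∈ s, f a) := by ring
      _ ≡ #s - 1 + (1 + f x * ∏ a ∈ s, f a) [ZMOD 4] :=
          (Int.add_modEq_one_add_mul_of_odd (hf x (mem_insert_self x s)) hprod).add_left _
      _ = ↑(#s + 1) - 1 + f x * ∏ a ∈ s, f a := by push_cast; ring

theorem Equiv.Perm.prod_apply_eq_one_of_mul_self_eq_one {α M : Type*} [Fintype α]
    [DecidableEq α] [CommMonoid M] {f : α → M} (hf : ∀ x, f x * f x = 1) {i a b : α}
    (hab : a ≠ b) (hai : a ≠ i) (hbi : b ≠ i) :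
    ∏ σ : Equiv.Perm α, f (σ i) = 1 := by
  have hfix : ∀ σ : Equiv.Perm α, (σ * Equiv.swap a b) i = σ i := fun σ => by
    simp [Equiv.swap_apply_of_ne_of_ne hai.symm hbi.symm]
  exact prod_involution (fun σ _ => σ * Equiv.swap a b) (fun σ _ => by rw [hfix, hf])
    (fun _ _ _ => mt Equiv.mul_swap_eq_iff.mp hab) (fun _ _ => mem_univ _)
    (fun σ _ => Equiv.mul_swap_mul_self a b σ)

theorem per_four_dvd (A : Matrix (Fin 4) (Fin 4) ℤ)
    (hA : ∀ i j, A i j = 1 ∨ A i j = -1) :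
    (4 : ℤ) ∣ per A := by
  have hsq : ∀ i j, A i j * A i j = 1 := fun i j => by rcases hA i j with h | h <;> simp [h]
  have hodd : ∀ σ : Equiv.Perm (Fin 4), Odd (∏ i, A i (σ i)) := fun σ =>
    prod_induction _ Odd (fun _ _ => Odd.mul) odd_one fun i _ => by
      rcases hA i (σ i) with h | h <;> simp [h]
  have hprod : ∏ σ : Equiv.Perm (Fin 4), ∏ i, A i (σ i) = 1 := by
    rw [prod_comm]
    refine prod_eq_one fun i _ => ?_
    obtain ⟨a, b, hab, hai, hbi⟩ : ∃ a b : Fin 4, a ≠ b ∧ a ≠ i ∧ b ≠ i := by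
      revert i; decide
    exact Equiv.Perm.prod_apply_eq_one_of_mul_self_eq_one (hsq i) hab hai hbi
  have hper := Int.sum_modEq_card_sub_one_add_prod_of_odd univ fun σ _ => hodd σ
  rw [hprod, card_univ, Fintype.card_perm] at hper
  exact Int.modEq_zero_iff_dvd.mp (hper.trans (by decide : (_ : ℤ) ≡ 0 [ZMOD 4]))
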